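/- arXiv:1811.10525 — 3 statements merged into one kernel-verified Lean document; each statement's English description precedes it below -/
import Mathlib

section
/- Cut-and-paste lemma for randomized protocol transcripts: let a : 𝒳 × T → ℝ≥0 and b : 𝒴 × T → ℝ≥0 be nonnegative functions on finite sets such that π^{x,y}(τ) := a(x,τ)·b(y,τ) is a probability distribution on T for every (x,y). Then for all x, x' ∈ 𝒳 and y, y' ∈ 𝒴: B(π^{x,y}, π^{x',y'}) = B(π^{x,y'}, π^{x',y}). -/
open Finset

/-- Fidelity `F(p,q) = Σ_τ √(p(τ)·q(τ))`. -/
noncomputable def fid {T : Type} [Fintype T] (p q : T → ℝ) : ℝ :=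
  ∑ τ, Real.sqrt (p τ * q τ)

/-- Bures metric `B(p,q) = √(1 − F(p,q))`. -/
noncomputable def bures {T : Type} [Fintype T] (p q : T → ℝ) : ℝ :=
  Real.sqrt (1 - fid p q)

section

variable {T : Type} [Fintype T] {p q p' q' : T → ℝ}

theorem fid_eq_of_mul_eq (h : ∀ τ, p τ * q τ = p' τ * q' τ) : fid p q = fid p' q' :=
  Finset.sum_congr rfl fun τ _ => congrArg Real.sqrt (h τ)

theorem bures_eq_of_mul_eq (h : ∀ τ, p τ * q τ = p' τ * q' τ) :
    bures p q = bures p' q' := by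
  rw [bures, bures, fid_eq_of_mul_eq h]

end

theorem cut_and_paste_general {𝒳 𝒴 T : Type} [Fintype T]
    (a : 𝒳 → T → ℝ) (b : 𝒴 → T → ℝ)
    (x x' : 𝒳) (y y' : 𝒴) :
    bures (fun τ => a x τ * b y τ) (fun τ => a x' τ * b y' τ)
      = bures (fun τ => a x τ * b y' τ) (fun τ => a x' τ * b y τ) :=
  bures_eq_of_mul_eq fun _ => by ring

/-- Cut-and-paste lemma for randomized protocol transcripts: if
`π^{x,y}(τ) = a(x,τ)·b(y,τ)` is a probability distribution on `T` for every `(x,y)`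
(with `a`, `b` nonnegative), then `B(π^{x,y}, π^{x',y'}) = B(π^{x,y'}, π^{x',y})`. -/
theorem cut_and_paste {𝒳 𝒴 T : Type} [Fintype 𝒳] [Fintype 𝒴] [Fintype T]
    (a : 𝒳 → T → ℝ) (b : 𝒴 → T → ℝ)
    (ha : ∀ x τ, 0 ≤ a x τ) (hb : ∀ y τ, 0 ≤ b y τ)
    (hdist : ∀ x y, ∑ τ, a x τ * b y τ = 1)
    (x x' : 𝒳) (y y' : 𝒴) :
    bures (fun τ => a x τ * b y τ) (fun τ => a x' τ * b y' τ)
      = bures (fun τ => a x τ * b y' τ) (fun τ => a x' τ * b y τ) :=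
  cut_and_paste_general a b x x' y y'
end

section
/- Pythagorean property for randomized protocol transcripts: let a : 𝒳 × T → ℝ≥0 and b : 𝒴 × T → ℝ≥0 be nonnegative functions on finite sets such that π^{x,y}(τ) := a(x,τ)·b(y,τ) is a probability distribution on T for every (x,y). Then for all x, x' ∈ 𝒳 and y, y' ∈ 𝒴: B²(π^{x,y'}, π^{x',y'}) + B²(π^{x,y}, π^{x',y}) ≤ 2 · B²(π^{x',y'}, π^{x,y}). -/
/-!
Because `π^{x,y}(τ) = a(x,τ) b(y,τ)`, each of the three fidelities factors termwise as
`Σ_τ √(a(x,τ) a(x',τ)) · w(τ)`, with weight `w = b(y',·)`, `b(y,·)` and `√(b(y,·) b(y',·))`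
respectively. AM–GM on the last weight gives
`2 F(π^{x',y'}, π^{x,y}) ≤ F(π^{x,y'}, π^{x',y'}) + F(π^{x,y}, π^{x',y})`,
and since fidelities of distributions are at most `1`, `B² = 1 - F` turns this into the claim.
-/

open Finset

lemma Real.sqrt_mul_le_half_add {u v : ℝ} (hu : 0 ≤ u) (hv : 0 ≤ v) :
    √(u * v) ≤ (u + v) / 2 := by
  rw [Real.sqrt_mul hu]
  nlinarith [sq_nonneg (√u - √v), Real.sq_sqrt hu, Real.sq_sqrt hv]

section Fidelity

variable {T : Type} [Fintype T]

lemma fid_le_one {p q : T → ℝ} (hp : ∀ τ, 0 ≤ p τ) (hq : ∀ τ, 0 ≤ q τ)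
    (hp_sum : ∑ τ, p τ = 1) (hq_sum : ∑ τ, q τ = 1) :
    fid p q ≤ 1 :=
  calc fid p q ≤ ∑ τ, (p τ + q τ) / 2 :=
        sum_le_sum fun τ _ => Real.sqrt_mul_le_half_add (hp τ) (hq τ)
    _ = 1 := by rw [← sum_div, sum_add_distrib, hp_sum, hq_sum]; norm_num

lemma bures_sq_eq_one_sub_fid {p q : T → ℝ} (h : fid p q ≤ 1) :
    bures p q ^ 2 = 1 - fid p q :=
  Real.sq_sqrt (sub_nonneg.mpr h)

lemma two_mul_sqrt_cross_le {α α' β β' : ℝ} (hα : 0 ≤ α * α') (hβ : 0 ≤ β) (hβ' : 0 ≤ β') :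
    2 * √(α' * β' * (α * β)) ≤ √(α * β' * (α' * β')) + √(α * β * (α' * β)) := by
  rw [show α' * β' * (α * β) = α * α' * (β' * β) by ring,
    show α * β' * (α' * β') = α * α' * β' ^ 2 by ring,
    show α * β * (α' * β) = α * α' * β ^ 2 by ring,
    Real.sqrt_mul hα, Real.sqrt_mul hα, Real.sqrt_mul hα, Real.sqrt_sq hβ', Real.sqrt_sq hβ]
  have := Real.sqrt_mul_le_half_add hβ' hβ
  nlinarith [Real.sqrt_nonneg (α * α')]

lemma two_mul_fid_cross_le_fid_add {a a' b b' : T → ℝ} (ha : ∀ τ, 0 ≤ a τ * a' τ)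
    (hb : ∀ τ, 0 ≤ b τ) (hb' : ∀ τ, 0 ≤ b' τ) :
    2 * fid (fun τ => a' τ * b' τ) (fun τ => a τ * b τ)
      ≤ fid (fun τ => a τ * b' τ) (fun τ => a' τ * b' τ)
        + fid (fun τ => a τ * b τ) (fun τ => a' τ * b τ) := by
  rw [fid, fid, fid, mul_sum, ← sum_add_distrib]
  exact sum_le_sum fun τ _ => two_mul_sqrt_cross_le (ha τ) (hb τ) (hb' τ)

end Fidelity

/-- Pythagorean property for randomized protocol transcripts: if
`π^{x,y}(τ) = a(x,τ)·b(y,τ)` is a probability distribution on `T` for every `(x,y)`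
(with `a`, `b` nonnegative), then
`B²(π^{x,y'}, π^{x',y'}) + B²(π^{x,y}, π^{x',y}) ≤ 2 · B²(π^{x',y'}, π^{x,y})`. -/
theorem pythagorean_property {𝒳 𝒴 T : Type} [Fintype 𝒳] [Fintype 𝒴] [Fintype T]
    (a : 𝒳 → T → ℝ) (b : 𝒴 → T → ℝ)
    (ha : ∀ x τ, 0 ≤ a x τ) (hb : ∀ y τ, 0 ≤ b y τ)
    (hdist : ∀ x y, ∑ τ, a x τ * b y τ = 1)
    (x x' : 𝒳) (y y' : 𝒴) :
    bures (fun τ => a x τ * b y' τ) (fun τ => a x' τ * b y' τ) ^ 2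
      + bures (fun τ => a x τ * b y τ) (fun τ => a x' τ * b y τ) ^ 2
      ≤ 2 * bures (fun τ => a x' τ * b y' τ) (fun τ => a x τ * b y τ) ^ 2 := by
  have hπ : ∀ x y τ, 0 ≤ a x τ * b y τ := fun x y τ => mul_nonneg (ha x τ) (hb y τ)
  have hfid : ∀ x₁ x₂ y₁ y₂,
      fid (fun τ => a x₁ τ * b y₁ τ) (fun τ => a x₂ τ * b y₂ τ) ≤ 1 := fun x₁ x₂ y₁ y₂ =>
    fid_le_one (hπ x₁ y₁) (hπ x₂ y₂) (hdist x₁ y₁) (hdist x₂ y₂)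
  rw [bures_sq_eq_one_sub_fid (hfid ..), bures_sq_eq_one_sub_fid (hfid ..),
    bures_sq_eq_one_sub_fid (hfid ..)]
  linarith [two_mul_fid_cross_le_fid_add (a := a x) (a' := a x') (b := b y) (b' := b y')
    (fun τ => mul_nonneg (ha x τ) (ha x' τ)) (hb y) (hb y')]
end

section
/- Average encoding theorem (Holevo-quantity form): let X be a finite set, μ a probability distribution on X, and for each x ∈ X let ρ^x be an n×n complex density matrix; set ρ̄ = Σ_{x} μ(x)·ρ^x. Then Σ_{x} μ(x) · B²(ρ^x, ρ̄) ≤ S(ρ̄) − Σ_{x} μ(x)·S(ρ^x). (The right-hand side equals the quantum mutual information I(X : A) of the classical–quantum state Σ_x μ(x)|x⟩⟨x| ⊗ ρ^x.) -/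
open Matrix ComplexOrder

/-- Positive-semidefinite square root of a matrix, extended by `0` to arbitrary matrices. -/
noncomputable def matSqrt {n : ℕ} (A : Matrix (Fin n) (Fin n) ℂ) : Matrix (Fin n) (Fin n) ℂ :=
  open scoped Classical in
  if h : A.PosSemidef then (h.1.eigenvectorUnitary : Matrix (Fin n) (Fin n) ℂ) *
    diagonal ((↑) ∘ Real.sqrt ∘ h.1.eigenvalues) *
    (star h.1.eigenvectorUnitary : Matrix (Fin n) (Fin n) ℂ) else 0

/-- Fidelity `F(ρ,σ) = Tr √(√σ ρ √σ)`. -/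
noncomputable def fidQ {n : ℕ} (ρ σ : Matrix (Fin n) (Fin n) ℂ) : ℝ :=
  (matSqrt (matSqrt σ * ρ * matSqrt σ)).trace.re

/-- Bures metric `B(ρ,σ) = √(1 − F(ρ,σ))`. -/
noncomputable def buresQ {n : ℕ} (ρ σ : Matrix (Fin n) (Fin n) ℂ) : ℝ :=
  Real.sqrt (1 - fidQ ρ σ)

/-- Von Neumann entropy `S(ρ) = −Σ_i λ_i log₂ λ_i` (eigenvalues `λ_i` of `ρ`),
with the convention `0·log₂ 0 = 0`. -/
noncomputable def vnEnt {n : ℕ} (ρ : Matrix (Fin n) (Fin n) ℂ) : ℝ :=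
  open scoped Classical in
  if h : ρ.IsHermitian then -∑ i, h.eigenvalues i * Real.logb 2 (h.eigenvalues i) else 0

/-!
Diagonalise `ρ = Σᵢ pᵢ |uᵢ⟩⟨uᵢ|` and `σ = Σⱼ qⱼ |vⱼ⟩⟨vⱼ|`; the overlaps `cᵢⱼ = |⟨uᵢ, vⱼ⟩|²` form a
doubly stochastic matrix. The fidelity dominates `Re Tr (√ρ √σ) = Σ √(pᵢ qⱼ) cᵢⱼ`, and `log t ≤ t - 1`
gives `1 - Σ √(pᵢ qⱼ) cᵢⱼ ≤ ½ Σ pᵢ cᵢⱼ (log pᵢ - log qⱼ) = ½ D(ρ‖σ)` (in nats) whenever the support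
of `ρ` lies in that of `σ`, which holds for `σ = ρ̄` and `μ(x) > 0`. The `μ`-average of `D(ρˣ‖ρ̄)` is
the Holevo quantity in nats, and `½ ln 2 ≤ 1` absorbs the change to base 2.
-/

open scoped MatrixOrder

namespace Real

lemma sub_sqrt_mul_sqrt_le_mul_log_sub_log {p q : ℝ} (hp : 0 ≤ p) (hq : 0 ≤ q)
    (hpq : q = 0 → p = 0) : p - √p * √q ≤ p * (log p - log q) / 2 := by
  rcases hp.eq_or_lt with rfl | hp
  · simp
  have hq : 0 < q := hq.lt_of_ne fun h => hp.ne' (hpq h.symm)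
  have hsp : 0 < √p := sqrt_pos.mpr hp
  have hlog : log (√q / √p) = (log q - log p) / 2 := by
    rw [log_div (sqrt_pos.mpr hq).ne' hsp.ne', log_sqrt hq.le, log_sqrt hp.le]
    ring
  have key := log_le_sub_one_of_pos (div_pos (sqrt_pos.mpr hq) hsp)
  rw [hlog] at key
  have : p * (√q / √p) = √p * √q := by rw [mul_div_left_comm, div_sqrt, mul_comm]
  nlinarith

end Real

section DoublyStochastic

variable {ι κ : Type*} [Fintype ι] [Fintype κ] {p : ι → ℝ} {q : κ → ℝ} {c : ι → κ → ℝ}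

open Real

lemma sum_sum_sqrt_mul_sqrt_mul_le_one (hp : ∀ i, 0 ≤ p i) (hq : ∀ j, 0 ≤ q j)
    (hc : ∀ i j, 0 ≤ c i j) (hrow : ∀ i, ∑ j, c i j = 1) (hcol : ∀ j, ∑ i, c i j = 1)
    (hp1 : ∑ i, p i = 1) (hq1 : ∑ j, q j = 1) :
    ∑ i, ∑ j, √(p i) * √(q j) * c i j ≤ 1 := by
  have amgm : ∀ i j, √(p i) * √(q j) * c i j ≤ (p i * c i j + q j * c i j) / 2 := fun i j => by
    nlinarith [hc i j, sq_nonneg (√(p i) - √(q j)), sq_sqrt (hp i), sq_sqrt (hq j),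
      mul_nonneg (hc i j) (sq_nonneg (√(p i) - √(q j)))]
  calc ∑ i, ∑ j, √(p i) * √(q j) * c i j
      ≤ ∑ i, ∑ j, (p i * c i j + q j * c i j) / 2 := by gcongr with i _ j _; exact amgm i j
    _ = (∑ i, ∑ j, p i * c i j + ∑ i, ∑ j, q j * c i j) / 2 := by
      simp only [← Finset.sum_add_distrib, Finset.sum_div]
    _ = 1 := by
      rw [Finset.sum_comm (f := fun i j => q j * c i j)]
      simp only [← Finset.mul_sum, hrow, hcol, mul_one, hp1, hq1]
      norm_num

lemma one_sub_sum_sum_sqrt_mul_sqrt_mul_le (hp : ∀ i, 0 ≤ p i) (hq : ∀ j, 0 ≤ q j)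
    (hc : ∀ i j, 0 ≤ c i j) (hrow : ∀ i, ∑ j, c i j = 1) (hp1 : ∑ i, p i = 1)
    (hsupp : ∀ j, q j = 0 → ∑ i, p i * c i j = 0) :
    1 - ∑ i, ∑ j, √(p i) * √(q j) * c i j
      ≤ (∑ i, p i * log (p i) - ∑ j, (∑ i, p i * c i j) * log (q j)) / 2 := by
  have pointwise : ∀ i j, c i j * (p i - √(p i) * √(q j))
      ≤ c i j * (p i * (log (p i) - log (q j)) / 2) := fun i j => by
    rcases (hc i j).eq_or_lt with h | h
    · simp [← h]
    refine mul_le_mul_of_nonneg_left (sub_sqrt_mul_sqrt_le_mul_log_sub_log (hp i) (hq j)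
      fun hqj => ?_) h.le
    have hpc := (Finset.sum_eq_zero_iff_of_nonneg fun i _ => mul_nonneg (hp i) (hc i j)).mp
      (hsupp j hqj) i (Finset.mem_univ i)
    exact (mul_eq_zero.mp hpc).resolve_right h.ne'
  have hmass : ∑ i, ∑ j, c i j * p i = 1 := by
    simp only [← Finset.sum_mul, hrow, one_mul, hp1]
  calc 1 - ∑ i, ∑ j, √(p i) * √(q j) * c i j
      = ∑ i, ∑ j, c i j * (p i - √(p i) * √(q j)) := by
        rw [← hmass]
        simp only [mul_sub, Finset.sum_sub_distrib]
        congr 1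
        exact Finset.sum_congr rfl fun i _ => Finset.sum_congr rfl fun j _ => by ring
    _ ≤ ∑ i, ∑ j, c i j * (p i * (log (p i) - log (q j)) / 2) :=
        Finset.sum_le_sum fun i _ => Finset.sum_le_sum fun j _ => pointwise i j
    _ = (∑ i, (∑ j, c i j) * (p i * log (p i)) - ∑ j, ∑ i, p i * c i j * log (q j)) / 2 := by
        rw [Finset.sum_comm (f := fun j i => p i * c i j * log (q j))]
        simp only [Finset.sum_mul, ← Finset.sum_sub_distrib, Finset.sum_div]
        exact Finset.sum_congr rfl fun i _ => Finset.sum_congr rfl fun j _ => by ring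
    _ = _ := by simp only [hrow, one_mul, Finset.sum_mul]

end DoublyStochastic

namespace Matrix

variable {l m : Type*} [Fintype l]

lemma conjTranspose_mul_self_apply_self (B : Matrix l m ℂ) (k : m) :
    (Bᴴ * B) k k = ((∑ a, ‖B a k‖ ^ 2 : ℝ) : ℂ) := by
  simp only [mul_apply, conjTranspose_apply]
  push_cast
  exact Finset.sum_congr rfl fun a _ => by rw [mul_comm, RCLike.star_def, Complex.mul_conj']

variable [Fintype m] [DecidableEq m]

lemma sum_norm_sq_col_eq_one_of_mem_unitaryGroup {F : Matrix m m ℂ}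
    (hF : F ∈ unitaryGroup m ℂ) (j : m) : ∑ i, ‖F i j‖ ^ 2 = 1 := by
  have h := conjTranspose_mul_self_apply_self F j
  rw [← star_eq_conjTranspose, Unitary.star_mul_self_of_mem hF, one_apply_eq] at h
  exact_mod_cast h.symm

lemma sum_norm_sq_row_eq_one_of_mem_unitaryGroup {F : Matrix m m ℂ}
    (hF : F ∈ unitaryGroup m ℂ) (i : m) : ∑ j, ‖F i j‖ ^ 2 = 1 := by
  simpa using sum_norm_sq_col_eq_one_of_mem_unitaryGroup (Unitary.star_mem hF) i

lemma conjTranspose_mul_diagonal_mul_apply_self (F : Matrix m m ℂ) (a : m → ℝ) (j : m) :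
    (Fᴴ * diagonal (Complex.ofReal ∘ a) * F) j j = ((∑ i, a i * ‖F i j‖ ^ 2 : ℝ) : ℂ) := by
  rw [mul_apply]
  simp only [mul_diagonal, conjTranspose_apply, Function.comp_apply]
  push_cast
  exact Finset.sum_congr rfl fun i _ => by
    rw [mul_comm (star _), mul_assoc, RCLike.star_def, Complex.conj_mul']

lemma star_mul_conj_diagonal_mul_apply_self (U V : Matrix m m ℂ) (a : m → ℝ) (j : m) :
    (star V * (U * diagonal (Complex.ofReal ∘ a) * star U) * V) j j
      = ((∑ i, a i * ‖(star U * V) i j‖ ^ 2 : ℝ) : ℂ) := by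
  rw [← conjTranspose_mul_diagonal_mul_apply_self, conjTranspose_mul, ← star_eq_conjTranspose,
    ← star_eq_conjTranspose, star_star]
  simp only [Matrix.mul_assoc]

lemma trace_conj_diagonal_mul_conj_diagonal (U V : Matrix m m ℂ) (a b : m → ℝ) :
    ((U * diagonal (Complex.ofReal ∘ a) * star U) * (V * diagonal (Complex.ofReal ∘ b) * star V)).trace
      = ((∑ i, ∑ j, a i * b j * ‖(star U * V) i j‖ ^ 2 : ℝ) : ℂ) := by
  set X := U * diagonal (Complex.ofReal ∘ a) * star U
  rw [show X * (V * diagonal (Complex.ofReal ∘ b) * star V)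
      = (X * V * diagonal (Complex.ofReal ∘ b)) * star V by simp only [Matrix.mul_assoc],
    trace_mul_comm, ← Matrix.mul_assoc, ← Matrix.mul_assoc, trace]
  simp only [diag_apply, mul_diagonal, star_mul_conj_diagonal_mul_apply_self, X,
    Function.comp_apply]
  push_cast
  rw [Finset.sum_comm]
  simp only [Finset.sum_mul]
  exact Finset.sum_congr rfl fun i _ => Finset.sum_congr rfl fun j _ => by ring

namespace IsHermitian

variable {A : Matrix m m ℂ} (hA : A.IsHermitian)

lemma eq_eigenvectorUnitary_mul_diagonal_mul_star :
    A = (hA.eigenvectorUnitary : Matrix m m ℂ) * diagonal (Complex.ofReal ∘ hA.eigenvalues)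
      * star (hA.eigenvectorUnitary : Matrix m m ℂ) := by
  conv_lhs => rw [hA.spectral_theorem, Unitary.conjStarAlgAut_apply]
  rfl

lemma star_eigenvectorUnitary_mul_self_mul_apply_self (j : m) :
    (star (hA.eigenvectorUnitary : Matrix m m ℂ) * A * hA.eigenvectorUnitary) j j
      = hA.eigenvalues j := by
  have h := hA.conjStarAlgAut_star_eigenvectorUnitary
  rw [Unitary.conjStarAlgAut_star_apply] at h
  rw [h, diagonal_apply_eq]
  rfl

lemma sum_eigenvalues_eq_re_trace : ∑ i, hA.eigenvalues i = A.trace.re := by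
  simp [hA.trace_eq_sum_eigenvalues]

lemma mul_re_star_eigenvectorUnitary_mul_mul_apply_self_le {ρ : Matrix m m ℂ} {c : ℝ}
    (hle : (c : ℂ) • ρ ≤ A) (j : m) :
    c * ((star (hA.eigenvectorUnitary : Matrix m m ℂ) * ρ * hA.eigenvectorUnitary) j j).re
      ≤ hA.eigenvalues j := by
  have h := ((le_iff.mp hle).conjTranspose_mul_mul_same (hA.eigenvectorUnitary : Matrix m m ℂ)
    ).diag_nonneg (i := j)
  rw [← star_eq_conjTranspose, Matrix.mul_sub, Matrix.sub_mul, Matrix.sub_apply,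
    hA.star_eigenvectorUnitary_mul_self_mul_apply_self, Matrix.mul_smul, Matrix.smul_mul,
    Matrix.smul_apply, smul_eq_mul] at h
  have h' := (Complex.nonneg_iff.mp h).1
  rw [Complex.sub_re, Complex.ofReal_re, Complex.re_ofReal_mul] at h'
  linarith

end IsHermitian

end Matrix

section Fidelity

variable {n : ℕ}

lemma matSqrt_of_posSemidef {A : Matrix (Fin n) (Fin n) ℂ} (hA : A.PosSemidef) :
    matSqrt A = (hA.1.eigenvectorUnitary : Matrix (Fin n) (Fin n) ℂ) *
      diagonal (Complex.ofReal ∘ Real.sqrt ∘ hA.1.eigenvalues) *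
      star (hA.1.eigenvectorUnitary : Matrix (Fin n) (Fin n) ℂ) :=
  dif_pos hA

lemma isHermitian_matSqrt (A : Matrix (Fin n) (Fin n) ℂ) : (matSqrt A).IsHermitian := by
  by_cases hA : A.PosSemidef
  · rw [matSqrt_of_posSemidef hA, star_eq_conjTranspose]
    refine isHermitian_mul_mul_conjTranspose _ (isHermitian_diagonal_iff.mpr ?_)
    exact fun i => Complex.conj_ofReal _
  · simp [matSqrt, hA]

lemma matSqrt_mul_self {A : Matrix (Fin n) (Fin n) ℂ} (hA : A.PosSemidef) :
    matSqrt A * matSqrt A = A := by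
  set U := (hA.1.eigenvectorUnitary : Matrix (Fin n) (Fin n) ℂ)
  have hU : star U * U = 1 := Unitary.coe_star_mul_self _
  conv_rhs => rw [hA.1.eq_eigenvectorUnitary_mul_diagonal_mul_star]
  rw [matSqrt_of_posSemidef hA]
  calc U * diagonal (Complex.ofReal ∘ Real.sqrt ∘ hA.1.eigenvalues) * star U *
        (U * diagonal (Complex.ofReal ∘ Real.sqrt ∘ hA.1.eigenvalues) * star U)
      = U * (diagonal (Complex.ofReal ∘ Real.sqrt ∘ hA.1.eigenvalues) * (star U * U) *
          diagonal (Complex.ofReal ∘ Real.sqrt ∘ hA.1.eigenvalues)) * star U := by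
        simp only [Matrix.mul_assoc]
    _ = U * diagonal (Complex.ofReal ∘ hA.1.eigenvalues) * star U := by
        rw [hU, Matrix.mul_one, diagonal_mul_diagonal]
        congr 3
        funext i
        simp only [Function.comp_apply, ← Complex.ofReal_mul,
          Real.mul_self_sqrt (hA.eigenvalues_nonneg i)]

lemma trace_matSqrt {A : Matrix (Fin n) (Fin n) ℂ} (hA : A.PosSemidef) :
    (matSqrt A).trace = ((∑ k, √(hA.1.eigenvalues k) : ℝ) : ℂ) := by
  rw [matSqrt_of_posSemidef hA, trace_mul_cycle, Unitary.coe_star_mul_self, Matrix.one_mul,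
    trace_diagonal]
  push_cast
  rfl

lemma re_conjTranspose_mul_apply_self_le {l m : Type*} [Fintype l] (W B : Matrix l m ℂ) (k : m) :
    ((Wᴴ * B) k k).re ≤ √(∑ a, ‖W a k‖ ^ 2) * √(∑ a, ‖B a k‖ ^ 2) :=
  calc ((Wᴴ * B) k k).re ≤ ‖(Wᴴ * B) k k‖ := Complex.re_le_norm _
    _ ≤ ∑ a, ‖W a k‖ * ‖B a k‖ := by
        rw [mul_apply]
        refine (norm_sum_le _ _).trans_eq (Finset.sum_congr rfl fun a _ => ?_)
        rw [norm_mul, conjTranspose_apply, norm_star]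
    _ ≤ _ := Real.sum_mul_le_sqrt_mul_sqrt _ _ _

/-- In an eigenbasis `W` of `Aᴴ A` the columns of `A W` have squared norms equal to the
eigenvalues, so `Tr A = Σₖ ⟪W eₖ, A W eₖ⟫` is bounded column by column by Cauchy–Schwarz. -/
lemma re_trace_le_re_trace_matSqrt_conjTranspose_mul_self (A : Matrix (Fin n) (Fin n) ℂ) :
    A.trace.re ≤ (matSqrt (Aᴴ * A)).trace.re := by
  have hM := posSemidef_conjTranspose_mul_self A
  set W := (hM.1.eigenvectorUnitary : Matrix (Fin n) (Fin n) ℂ)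
  have hW : W ∈ unitaryGroup (Fin n) ℂ := hM.1.eigenvectorUnitary.2
  have hcolW : ∀ k, ∑ a, ‖W a k‖ ^ 2 = 1 := sum_norm_sq_col_eq_one_of_mem_unitaryGroup hW
  have hcolAW : ∀ k, ∑ a, ‖(A * W) a k‖ ^ 2 = hM.1.eigenvalues k := fun k => by
    have h := conjTranspose_mul_self_apply_self (A * W) k
    rw [conjTranspose_mul, ← star_eq_conjTranspose W, Matrix.mul_assoc, ← Matrix.mul_assoc Aᴴ,
      ← Matrix.mul_assoc, hM.1.star_eigenvectorUnitary_mul_self_mul_apply_self] at h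
    exact_mod_cast h.symm
  have htrace : A.trace = (Wᴴ * (A * W)).trace := by
    rw [← Matrix.mul_assoc, trace_mul_cycle, ← star_eq_conjTranspose,
      Unitary.mul_star_self_of_mem hW, Matrix.one_mul]
  rw [trace_matSqrt hM, Complex.ofReal_re, htrace, trace, Complex.re_sum]
  refine Finset.sum_le_sum fun k _ => (re_conjTranspose_mul_apply_self_le W (A * W) k).trans_eq ?_
  rw [hcolW, hcolAW, Real.sqrt_one, one_mul]

lemma re_trace_matSqrt_mul_matSqrt_le_fidQ {ρ : Matrix (Fin n) (Fin n) ℂ} (hρ : ρ.PosSemidef)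
    (σ : Matrix (Fin n) (Fin n) ℂ) : (matSqrt ρ * matSqrt σ).trace.re ≤ fidQ ρ σ := by
  have h : (matSqrt ρ * matSqrt σ)ᴴ * (matSqrt ρ * matSqrt σ) = matSqrt σ * ρ * matSqrt σ := by
    rw [conjTranspose_mul, (isHermitian_matSqrt ρ).eq, (isHermitian_matSqrt σ).eq,
      Matrix.mul_assoc, ← Matrix.mul_assoc (matSqrt ρ), matSqrt_mul_self hρ, Matrix.mul_assoc]
  rw [fidQ, ← h]
  exact re_trace_le_re_trace_matSqrt_conjTranspose_mul_self _

end Fidelity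

/-- `Tr (ρ log σ)` (natural logarithm) evaluated in an eigenbasis of `σ`. Since `Real.log 0 = 0`,
this is the usual quantity only when the support of `ρ` lies in that of `σ`. -/
noncomputable def Matrix.IsHermitian.traceMulLog {m : Type*} [Fintype m] [DecidableEq m]
    {σ : Matrix m m ℂ} (hσ : σ.IsHermitian) (ρ : Matrix m m ℂ) : ℝ :=
  ∑ j, ((star (hσ.eigenvectorUnitary : Matrix m m ℂ) * ρ * hσ.eigenvectorUnitary) j j).re *
    Real.log (hσ.eigenvalues j)

namespace Matrix.IsHermitian

variable {m : Type*} [Fintype m] [DecidableEq m] {σ : Matrix m m ℂ} (hσ : σ.IsHermitian)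

lemma traceMulLog_self :
    hσ.traceMulLog σ = ∑ j, hσ.eigenvalues j * Real.log (hσ.eigenvalues j) := by
  simp only [traceMulLog, star_eigenvectorUnitary_mul_self_mul_apply_self, Complex.ofReal_re]

lemma traceMulLog_sum_smul {X : Type*} [Fintype X] (μ : X → ℝ) (ρ : X → Matrix m m ℂ) :
    hσ.traceMulLog (∑ x, (μ x : ℂ) • ρ x) = ∑ x, μ x * hσ.traceMulLog (ρ x) := by
  simp only [traceMulLog, Matrix.sum_apply, Matrix.mul_smul,
    Matrix.smul_mul, smul_apply, smul_eq_mul, Complex.re_sum, Complex.re_ofReal_mul,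
    Finset.mul_sum, Finset.sum_mul]
  rw [Finset.sum_comm]
  exact Finset.sum_congr rfl fun x _ => Finset.sum_congr rfl fun j _ => by ring

end Matrix.IsHermitian

section Entropy

variable {n : ℕ}

lemma vnEnt_eq_neg_traceMulLog_div_log_two {ρ : Matrix (Fin n) (Fin n) ℂ}
    (hρ : ρ.IsHermitian) : vnEnt ρ = -hρ.traceMulLog ρ / Real.log 2 := by
  rw [vnEnt, dif_pos hρ, hρ.traceMulLog_self, neg_div, Finset.sum_div]
  simp only [Real.logb, mul_div_assoc]

lemma sum_mul_traceMulLog_sub_traceMulLog_eq {X : Type*} [Fintype X] (μ : X → ℝ)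
    {ρ : X → Matrix (Fin n) (Fin n) ℂ} (hρ : ∀ x, (ρ x).IsHermitian)
    (hσ : (∑ x, (μ x : ℂ) • ρ x).IsHermitian) :
    ∑ x, μ x * ((hρ x).traceMulLog (ρ x) - hσ.traceMulLog (ρ x))
      = Real.log 2 * (vnEnt (∑ x, (μ x : ℂ) • ρ x) - ∑ x, μ x * vnEnt (ρ x)) := by
  have hlog2 : Real.log 2 ≠ 0 := by positivity
  simp only [vnEnt_eq_neg_traceMulLog_div_log_two hσ, hσ.traceMulLog_sum_smul,
    vnEnt_eq_neg_traceMulLog_div_log_two (hρ _), mul_div_assoc', mul_neg, neg_div,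
    Finset.sum_neg_distrib, ← Finset.sum_div, mul_sub, Finset.sum_sub_distrib]
  field_simp
  ring

/-- The right-hand side is `D(ρ‖σ) / 2` in nats; `c • ρ ≤ σ` puts the support of `ρ` inside
that of `σ`. -/
theorem sq_buresQ_le_traceMulLog_sub_traceMulLog {ρ σ : Matrix (Fin n) (Fin n) ℂ}
    (hρ : ρ.PosSemidef) (hσ : σ.PosSemidef) (hρtr : ρ.trace = 1) (hσtr : σ.trace = 1)
    {c : ℝ} (hc : 0 < c) (hle : (c : ℂ) • ρ ≤ σ) :
    buresQ ρ σ ^ 2 ≤ (hρ.1.traceMulLog ρ - hσ.1.traceMulLog ρ) / 2 := by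
  set U := (hρ.1.eigenvectorUnitary : Matrix (Fin n) (Fin n) ℂ)
  set V := (hσ.1.eigenvectorUnitary : Matrix (Fin n) (Fin n) ℂ)
  set P := hρ.1.eigenvalues
  set Q := hσ.1.eigenvalues
  set C : Fin n → Fin n → ℝ := fun i j => ‖(star U * V) i j‖ ^ 2
  have hUV : star U * V ∈ unitaryGroup (Fin n) ℂ :=
    mul_mem (Unitary.star_mem hρ.1.eigenvectorUnitary.2) hσ.1.eigenvectorUnitary.2
  have hP1 : ∑ i, P i = 1 := by rw [hρ.1.sum_eigenvalues_eq_re_trace, hρtr, Complex.one_re]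
  have hQ1 : ∑ j, Q j = 1 := by rw [hσ.1.sum_eigenvalues_eq_re_trace, hσtr, Complex.one_re]
  have hdiag : ∀ j, (star V * ρ * V) j j = ((∑ i, P i * C i j : ℝ) : ℂ) := fun j => by
    conv_lhs => rw [hρ.1.eq_eigenvectorUnitary_mul_diagonal_mul_star]
    exact star_mul_conj_diagonal_mul_apply_self _ _ _ j
  have hsupp : ∀ j, Q j = 0 → ∑ i, P i * C i j = 0 := fun j hQj => by
    have h := hσ.1.mul_re_star_eigenvectorUnitary_mul_mul_apply_self_le hle j
    rw [hdiag, Complex.ofReal_re] at h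
    change _ ≤ Q j at h
    rw [hQj] at h
    exact le_antisymm (nonpos_of_mul_nonpos_right h hc)
      (Finset.sum_nonneg fun i _ => mul_nonneg (hρ.eigenvalues_nonneg i) (sq_nonneg _))
  have hfid : ∑ i, ∑ j, √(P i) * √(Q j) * C i j ≤ fidQ ρ σ := by
    have h := re_trace_matSqrt_mul_matSqrt_le_fidQ hρ σ
    rwa [matSqrt_of_posSemidef hρ, matSqrt_of_posSemidef hσ,
      trace_conj_diagonal_mul_conj_diagonal, Complex.ofReal_re] at h
  have hlogσ : hσ.1.traceMulLog ρ = ∑ j, (∑ i, P i * C i j) * Real.log (Q j) := by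
    change ∑ j, ((star V * ρ * V) j j).re * Real.log (Q j) = _
    simp only [hdiag, Complex.ofReal_re]
  have hG := sum_sum_sqrt_mul_sqrt_mul_le_one hρ.eigenvalues_nonneg hσ.eigenvalues_nonneg
    (fun i j => sq_nonneg _) (sum_norm_sq_row_eq_one_of_mem_unitaryGroup hUV)
    (sum_norm_sq_col_eq_one_of_mem_unitaryGroup hUV) hP1 hQ1
  have hKL := one_sub_sum_sum_sqrt_mul_sqrt_mul_le hρ.eigenvalues_nonneg hσ.eigenvalues_nonneg
    (fun i j => sq_nonneg _) (sum_norm_sq_row_eq_one_of_mem_unitaryGroup hUV) hP1 hsupp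
  rw [buresQ, hρ.1.traceMulLog_self, hlogσ]
  rcases le_total 0 (1 - fidQ ρ σ) with h | h
  · rw [Real.sq_sqrt h]
    linarith
  · rw [Real.sqrt_eq_zero_of_nonpos h]
    linarith

end Entropy

/-- Average encoding theorem (Holevo-quantity form): for a distribution `μ` on a finite
set `X` and density matrices `ρ^x` with average `ρ̄ = Σ_x μ(x)·ρ^x`,
`Σ_x μ(x)·B²(ρ^x, ρ̄) ≤ S(ρ̄) − Σ_x μ(x)·S(ρ^x)`
(the right-hand side is the Holevo information `I(X:A)` of the cq-state). -/
theorem average_encoding {n : ℕ} {X : Type} [Fintype X]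
    (μ : X → ℝ) (hμ0 : ∀ x, 0 ≤ μ x) (hμ1 : ∑ x, μ x = 1)
    (ρ : X → Matrix (Fin n) (Fin n) ℂ)
    (hρ : ∀ x, (ρ x).PosSemidef) (hρtr : ∀ x, (ρ x).trace = 1) :
    ∑ x, μ x * buresQ (ρ x) (∑ x', (μ x' : ℂ) • ρ x') ^ 2
      ≤ vnEnt (∑ x', (μ x' : ℂ) • ρ x') - ∑ x, μ x * vnEnt (ρ x) := by
  set σ := ∑ x', (μ x' : ℂ) • ρ x'
  have hterm : ∀ x, 0 ≤ (μ x : ℂ) • ρ x := fun x =>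
    ((hρ x).smul (Complex.zero_le_real.mpr (hμ0 x))).nonneg
  have hσ : σ.PosSemidef := (Finset.sum_nonneg fun x _ => hterm x).posSemidef
  have hσtr : σ.trace = 1 := by
    simp only [σ, trace_sum, trace_smul, hρtr, smul_eq_mul, mul_one]
    exact_mod_cast hμ1
  have hbures : ∀ x, μ x * buresQ (ρ x) σ ^ 2
      ≤ μ x * ((hρ x).1.traceMulLog (ρ x) - hσ.1.traceMulLog (ρ x)) / 2 := fun x => by
    rcases (hμ0 x).eq_or_lt with h | h
    · simp [← h]
    rw [mul_div_assoc]
    exact mul_le_mul_of_nonneg_left (sq_buresQ_le_traceMulLog_sub_traceMulLog (hρ x) hσ (hρtr x)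
      hσtr h (Finset.single_le_sum (fun x _ => hterm x) (Finset.mem_univ x))) h.le
  have hsum : ∑ x, μ x * buresQ (ρ x) σ ^ 2
      ≤ Real.log 2 / 2 * (vnEnt σ - ∑ x, μ x * vnEnt (ρ x)) := calc
    _ ≤ ∑ x, μ x * ((hρ x).1.traceMulLog (ρ x) - hσ.1.traceMulLog (ρ x)) / 2 :=
        Finset.sum_le_sum fun x _ => hbures x
    _ = _ := by
        rw [← Finset.sum_div, sum_mul_traceMulLog_sub_traceMulLog_eq μ (fun x => (hρ x).1) hσ.1]
        ring
  have hlhs : 0 ≤ ∑ x, μ x * buresQ (ρ x) σ ^ 2 :=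
    Finset.sum_nonneg fun x _ => mul_nonneg (hμ0 x) (sq_nonneg _)
  have hlog2 : 0 < Real.log 2 / 2 ∧ Real.log 2 / 2 ≤ 1 :=
    ⟨by positivity, by linarith [Real.log_two_lt_d9]⟩
  nlinarith
end
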